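/- arXiv:2312.12981 — 3 statements merged into one kernel-verified Lean document; each statement's English description precedes it below -/
import Mathlib

section
/- Let A be a structure with a symmetric ternary relation that admits a homomorphism to LO_4. If f, g : A → LO_4 are two homomorphisms that differ in exactly one point d (i.e., f(a) = g(a) for all a ≠ d), then the multifunction m : A → 2^{[4]} defined by m(a) = {f(a), g(a)} is a multihomomorphism, i.e., for every relational tuple (a,b,c) of A, every triple in m(a) × m(b) × m(c) has a unique maximum. -/
/-- `(a, b, c)` has a unique maximum. -/
def UMax {α : Type*} [LinearOrder α] (a b c : α) : Prop :=
  (b < a ∧ c < a) ∨ (a < b ∧ c < b) ∨ (a < c ∧ b < c)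

/-- If two homomorphisms `f, g : A → LO₄` differ in exactly one point `d`, then
`m(a) = {f(a), g(a)}` is a multihomomorphism: for each relational tuple `(a,b,c)`
of `A`, every triple in `m(a) × m(b) × m(c)` has a unique maximum. -/
theorem differ_one_point_multihom {A : Type*} (R : Set (A × A × A))
    (hsym : ∀ a b c : A, (a, b, c) ∈ R → (b, a, c) ∈ R ∧ (a, c, b) ∈ R)
    (f g : A → ℕ)
    (hf1 : ∀ a, f a ∈ Finset.Icc 1 4) (hg1 : ∀ a, g a ∈ Finset.Icc 1 4)
    (hf : ∀ t ∈ R, UMax (f t.1) (f t.2.1) (f t.2.2))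
    (hg : ∀ t ∈ R, UMax (g t.1) (g t.2.1) (g t.2.2))
    (d : A) (hdiff : ∀ a : A, a ≠ d → f a = g a) :
    ∀ t ∈ R, ∀ x ∈ ({f t.1, g t.1} : Set ℕ), ∀ y ∈ ({f t.2.1, g t.2.1} : Set ℕ),
      ∀ z ∈ ({f t.2.2, g t.2.2} : Set ℕ), UMax x y z := by
  rintro ⟨a, b, c⟩ ht x hx y hy z hz
  have H1 := hf _ ht
  have H2 := hg _ ht
  simp only [Set.mem_insert_iff, Set.mem_singleton_iff] at hx hy hz
  dsimp only at H1 H2 hx hy hz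
  unfold UMax at H1 H2 ⊢
  rcases eq_or_ne a d with ha | ha <;> rcases eq_or_ne b d with hb | hb <;>
    rcases eq_or_ne c d with hc | hc
  all_goals first | rw [ha] at hx H1 H2 | replace ha := hdiff a ha
  all_goals first | rw [hb] at hy H1 H2 | replace hb := hdiff b hb
  all_goals first | rw [hc] at hz H1 H2 | replace hc := hdiff c hc
  all_goals omega
end

section
/- Inductive step of reconfiguration: Let f be a binary polymorphism from LO_3 to LO_4, h a strictly increasing map {1,2,3} → {1,2,3,4}, and t ∈ {1,2,3,4} with f(x,y) ∈ {h(x), t} for all x, y. Suppose f(x_0, y_0) = t and x_0 is maximal among first coordinates of points where f equals t. Then the map f' that agrees with f everywhere except f'(x_0, y_0) = h(x_0) is also a binary polymorphism from LO_3 to LO_4. -/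
/-- `f` is a binary polymorphism from `LO₃` to `LO₄`. -/
def IsPoly2 (f : Fin 3 → Fin 3 → Fin 4) : Prop :=
  ∀ u₁ v₁ w₁ u₂ v₂ w₂ : Fin 3, UMax u₁ v₁ w₁ → UMax u₂ v₂ w₂ →
    UMax (f u₁ u₂) (f v₁ v₂) (f w₁ w₂)

lemma umax_swap12 {α : Type*} [LinearOrder α] {a b c : α} (H : UMax a b c) : UMax b a c := by
  unfold UMax at *; tauto

lemma umax_swap23 {α : Type*} [LinearOrder α] {a b c : α} (H : UMax a b c) : UMax a c b := by
  unfold UMax at *; tauto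

lemma umax_cycle {α : Type*} [LinearOrder α] {a b c : α} (H : UMax a b c) : UMax c a b := by
  unfold UMax at *; tauto

lemma umax_cycle' {α : Type*} [LinearOrder α] {a b c : α} (H : UMax a b c) : UMax b c a := by
  unfold UMax at *; tauto

lemma helperA (f : Fin 3 → Fin 3 → Fin 4) (hf : IsPoly2 f)
    (h : Fin 3 → Fin 4) (hmono : StrictMono h) (t : Fin 4)
    (hft : ∀ x y : Fin 3, f x y = h x ∨ f x y = t)
    (x₀ y₀ : Fin 3) (h₀ : f x₀ y₀ = t)
    (hmax : ∀ x y : Fin 3, f x y = t → x ≤ x₀)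
    (v₁ w₁ v₂ w₂ : Fin 3) (hU1 : UMax x₀ v₁ w₁) (hU2 : UMax y₀ v₂ w₂) :
    UMax (h x₀) (f v₁ v₂) (f w₁ w₂) := by
  have hm := hf x₀ v₁ w₁ y₀ v₂ w₂ hU1 hU2
  rw [h₀] at hm
  rcases hm with ⟨ha, hb⟩ | ⟨ha, hb⟩ | ⟨ha, hb⟩
  · -- t is unique max of (t, fV, fW)
    have hav : f v₁ v₂ = h v₁ :=
      (hft v₁ v₂).resolve_right (fun e => absurd (e ▸ ha) (lt_irrefl t))
    have hbw : f w₁ w₂ = h w₁ :=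
      (hft w₁ w₂).resolve_right (fun e => absurd (e ▸ hb) (lt_irrefl t))
    rw [hav, hbw]
    rcases hU1 with ⟨h1, h2⟩ | ⟨h1, h2⟩ | ⟨h1, h2⟩
    · exact Or.inl ⟨hmono h1, hmono h2⟩
    · exact Or.inr (Or.inl ⟨hmono h1, hmono h2⟩)
    · exact Or.inr (Or.inr ⟨hmono h1, hmono h2⟩)
  · -- fV is unique max
    have hav : f v₁ v₂ = h v₁ :=
      (hft v₁ v₂).resolve_right (fun e => absurd (e ▸ ha) (lt_irrefl t))
    rcases hU1 with ⟨h1, h2⟩ | ⟨h1, h2⟩ | ⟨h1, h2⟩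
    · rw [hav] at hb ⊢
      exact Or.inl ⟨hmono h1, hb.trans (hmono h1)⟩
    · rw [hav] at hb ⊢
      exact Or.inr (Or.inl ⟨hmono h1, hb⟩)
    · rcases hft w₁ w₂ with hbw | hbt
      · rw [hav, hbw] at hb
        exact absurd (hmono h2) (lt_asymm hb)
      · exact absurd (hmax w₁ w₂ hbt) (not_le.mpr h1)
  · -- fW is unique max
    have hbw : f w₁ w₂ = h w₁ :=
      (hft w₁ w₂).resolve_right (fun e => absurd (e ▸ ha) (lt_irrefl t))
    rcases hU1 with ⟨h1, h2⟩ | ⟨h1, h2⟩ | ⟨h1, h2⟩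
    · rw [hbw] at hb ⊢
      exact Or.inl ⟨hb.trans (hmono h2), hmono h2⟩
    · rcases hft v₁ v₂ with hav | hat
      · rw [hav, hbw] at hb
        exact absurd (hmono h2) (lt_asymm hb)
      · exact absurd (hmax v₁ v₂ hat) (not_le.mpr h1)
    · rw [hbw] at hb ⊢
      exact Or.inr (Or.inr ⟨hmono h1, hb⟩)

lemma helperB (f : Fin 3 → Fin 3 → Fin 4) (hf : IsPoly2 f)
    (h : Fin 3 → Fin 4) (hmono : StrictMono h) (t : Fin 4)
    (hft : ∀ x y : Fin 3, f x y = h x ∨ f x y = t)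
    (x₀ y₀ : Fin 3) (h₀ : f x₀ y₀ = t)
    (hmax : ∀ x y : Fin 3, f x y = t → x ≤ x₀)
    (w₁ w₂ : Fin 3) (hU1 : UMax x₀ x₀ w₁) (hU2 : UMax y₀ y₀ w₂) :
    UMax (h x₀) (h x₀) (f w₁ w₂) := by
  have h1 : x₀ < w₁ := by
    rcases hU1 with ⟨h1, _⟩ | ⟨h1, _⟩ | ⟨h1, _⟩
    · exact absurd h1 (lt_irrefl _)
    · exact absurd h1 (lt_irrefl _)
    · exact h1
  have hm := hf x₀ x₀ w₁ y₀ y₀ w₂ hU1 hU2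
  rw [h₀] at hm
  have hbw : f w₁ w₂ = h w₁ := by
    rcases hft w₁ w₂ with hbw | hbt
    · exact hbw
    · exact absurd (hmax w₁ w₂ hbt) (not_le.mpr h1)
  rw [hbw]
  exact Or.inr (Or.inr ⟨hmono h1, hmono h1⟩)

/-- Inductive step of reconfiguration: replacing, at a point `(x₀, y₀)` with maximal
first coordinate among the trash-coloured points, the trash colour `t` by `h x₀`
yields again a binary polymorphism from `LO₃` to `LO₄`. -/
theorem reconfiguration_step (f : Fin 3 → Fin 3 → Fin 4) (hf : IsPoly2 f)
    (h : Fin 3 → Fin 4) (hmono : StrictMono h) (t : Fin 4)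
    (hft : ∀ x y : Fin 3, f x y = h x ∨ f x y = t)
    (x₀ y₀ : Fin 3) (h₀ : f x₀ y₀ = t)
    (hmax : ∀ x y : Fin 3, f x y = t → x ≤ x₀) :
    IsPoly2 (fun x y => if x = x₀ ∧ y = y₀ then h x₀ else f x y) := by
  intro u₁ v₁ w₁ u₂ v₂ w₂ h1 h2
  simp only
  by_cases hU : u₁ = x₀ ∧ u₂ = y₀ <;> by_cases hV : v₁ = x₀ ∧ v₂ = y₀ <;>
    by_cases hW : w₁ = x₀ ∧ w₂ = y₀
  · -- TTT : impossible
    obtain ⟨rfl, rfl⟩ := hU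
    obtain ⟨e1, _⟩ := hV
    obtain ⟨e3, _⟩ := hW
    subst e1; subst e3
    rcases h1 with ⟨c, _⟩ | ⟨c, _⟩ | ⟨c, _⟩ <;> exact absurd c (lt_irrefl _)
  · -- TTF
    obtain ⟨rfl, rfl⟩ := hU
    obtain ⟨e1, e2⟩ := hV
    subst e1; subst e2
    simp only [if_neg hW, eq_self_iff_true, and_self, if_true]
    exact helperB f hf h hmono t hft _ _ h₀ hmax w₁ w₂ h1 h2
  · -- TFT
    obtain ⟨rfl, rfl⟩ := hU
    obtain ⟨e1, e2⟩ := hW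
    subst e1; subst e2
    simp only [if_neg hV, eq_self_iff_true, and_self, if_true]
    exact umax_swap23 (helperB f hf h hmono t hft _ _ h₀ hmax v₁ v₂
      (umax_swap23 h1) (umax_swap23 h2))
  · -- TFF
    obtain ⟨rfl, rfl⟩ := hU
    simp only [if_neg hV, if_neg hW, eq_self_iff_true, and_self, if_true]
    exact helperA f hf h hmono t hft _ _ h₀ hmax v₁ w₁ v₂ w₂ h1 h2
  · -- FTT
    obtain ⟨rfl, rfl⟩ := hV
    obtain ⟨e1, e2⟩ := hW
    subst e1; subst e2
    simp only [if_neg hU, eq_self_iff_true, and_self, if_true]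
    exact umax_cycle (helperB f hf h hmono t hft _ _ h₀ hmax u₁ u₂
      (umax_cycle' h1) (umax_cycle' h2))
  · -- FTF
    obtain ⟨rfl, rfl⟩ := hV
    simp only [if_neg hU, if_neg hW, eq_self_iff_true, and_self, if_true]
    exact umax_swap12 (helperA f hf h hmono t hft _ _ h₀ hmax u₁ w₁ u₂ w₂
      (umax_swap12 h1) (umax_swap12 h2))
  · -- FFT
    obtain ⟨rfl, rfl⟩ := hW
    simp only [if_neg hU, if_neg hV, eq_self_iff_true, and_self, if_true]
    exact umax_cycle' (helperA f hf h hmono t hft _ _ h₀ hmax u₁ v₁ u₂ v₂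
      (umax_cycle h1) (umax_cycle h2))
  · -- FFF
    rw [if_neg hU, if_neg hV, if_neg hW]
    exact hf u₁ v₁ w₁ u₂ v₂ w₂ h1 h2
end

section
/- Let M be the minion of affine maps over Z_3, i.e., n-ary elements are tuples (α_1,...,α_n) ∈ Z_3^n with Σα_i = 1 in Z_3, with minor operation along π : [n] → [m] given by summing coefficients over preimages. If a subminion of M contains an element depending on at least two coordinates (i.e., having at least two nonzero coefficients), then it contains the binary element (2,2). -/
open Finset in
/-- The minor of a coefficient tuple `α ∈ Z₃ⁿ` along `π : [n] → [m]`: coefficients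
are summed over preimages. -/
def minorMap {n m : ℕ} (π : Fin n → Fin m) (α : Fin n → ZMod 3) : Fin m → ZMod 3 :=
  fun j => ∑ i ∈ Finset.univ.filter (fun i => π i = j), α i

open Finset in
lemma minorMap_three (σ : Fin 3 → Fin 2) (δ : Fin 3 → ZMod 3) (k : Fin 2) :
    minorMap σ δ k = (if σ 0 = k then δ 0 else 0) + (if σ 1 = k then δ 1 else 0)
      + (if σ 2 = k then δ 2 else 0) := by
  simp [minorMap, Finset.sum_filter, Fin.sum_univ_three]

open Finset in
lemma key (δ : Fin 3 → ZMod 3) (h : δ 0 + δ 1 + δ 2 = 1) (h0 : δ 0 ≠ 0) (h1 : δ 1 ≠ 0) :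
    ∃ σ : Fin 3 → Fin 2, minorMap σ δ = fun _ => (2 : ZMod 3) := by
  have hval : ∀ x : ZMod 3, x ≠ 0 → x = 1 ∨ x = 2 := by decide
  have h2 : δ 2 = 1 - δ 0 - δ 1 := by linear_combination h
  rcases hval _ h0 with ha | ha <;> rcases hval _ h1 with hb | hb
  · refine ⟨![0, 0, 1], ?_⟩
    funext k
    fin_cases k <;> simp [minorMap_three, ha, hb, h2] <;> decide
  · refine ⟨![0, 1, 0], ?_⟩
    funext k
    fin_cases k <;> simp [minorMap_three, ha, hb, h2] <;> decide
  · refine ⟨![0, 1, 1], ?_⟩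
    funext k
    fin_cases k <;> simp [minorMap_three, ha, hb, h2] <;> decide
  · refine ⟨![0, 1, 1], ?_⟩
    funext k
    fin_cases k <;> simp [minorMap_three, ha, hb, h2] <;> decide

/-- If a subminion of the minion of affine maps over `Z₃` contains an element with at
least two nonzero coefficients, then it contains the binary element `(2, 2)`. -/
theorem subminion_contains_22 (S : ∀ n : ℕ, Set (Fin n → ZMod 3))
    (haff : ∀ n, ∀ α ∈ S n, ∑ i, α i = 1)
    (hclosed : ∀ n m (π : Fin n → Fin m), ∀ α ∈ S n, minorMap π α ∈ S m)
    (n : ℕ) (α : Fin n → ZMod 3) (hα : α ∈ S n)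
    (i j : Fin n) (hij : i ≠ j) (hi : α i ≠ 0) (hj : α j ≠ 0) :
    (fun _ : Fin 2 => (2 : ZMod 3)) ∈ S 2 := by
  classical
  set π : Fin n → Fin 3 := fun k => if k = i then 0 else if k = j then 1 else 2 with hπ
  set δ : Fin 3 → ZMod 3 := minorMap π α with hδ
  have hδS : δ ∈ S 3 := hclosed n 3 π α hα
  have hδ0 : δ 0 = α i := by
    have : Finset.univ.filter (fun k => π k = 0) = {i} := by
      ext k
      simp only [Finset.mem_filter, Finset.mem_univ, true_and, Finset.mem_singleton, hπ]
      split_ifs with h' h'' <;> simp_all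
    simp [hδ, minorMap, this]
  have hδ1 : δ 1 = α j := by
    have : Finset.univ.filter (fun k => π k = 1) = {j} := by
      ext k
      simp only [Finset.mem_filter, Finset.mem_univ, true_and, Finset.mem_singleton, hπ]
      split_ifs with h' h'' <;> simp_all
    simp [hδ, minorMap, this]
  have hsum : δ 0 + δ 1 + δ 2 = 1 := by
    have := haff 3 δ hδS
    simpa [Fin.sum_univ_three] using this
  obtain ⟨σ, hσ⟩ := key δ hsum (hδ0 ▸ hi) (hδ1 ▸ hj)
  have := hclosed 3 2 σ δ hδS
  rwa [hσ] at this
end
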